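/- arXiv:2206.12024 — 3 statements merged into one kernel-verified Lean document; each statement's English description precedes it below -/
import Mathlib

section
/- Classical Hilbert inequality: for any square-summable sequence (a_k)_{k≥0} of complex numbers, Σ_{n=0}^∞ ( Σ_{k=0}^∞ |a_k|/(n+k+1) )^2 ≤ π^2 Σ_{k=0}^∞ |a_k|^2. -/
open MeasureTheory Metric Set Complex

/-- The integral mean `M_p(r,f)`. -/
noncomputable def Mp (p : ℝ) (f : ℂ → ℂ) (r : ℝ) : ℝ :=
  ((1 / (2 * Real.pi)) * ∫ θ in (0:ℝ)..(2 * Real.pi),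
      ‖f (r * Complex.exp (θ * Complex.I))‖ ^ p) ^ (1 / p)

/-- The Hardy space norm `‖f‖_{H^p} = sup_{0<r<1} M_p(r,f)`. -/
noncomputable def hardyNorm (p : ℝ) (f : ℂ → ℂ) : ℝ :=
  ⨆ r : Set.Ioo (0:ℝ) 1, Mp p f (r : ℝ)

/-- Membership in the Hardy space `H^p` on the unit disc. -/
def MemHp (p : ℝ) (f : ℂ → ℂ) : Prop :=
  AnalyticOnNhd ℂ f (Metric.ball 0 1) ∧
    BddAbove (Set.range fun r : Set.Ioo (0:ℝ) 1 => Mp p f (r : ℝ))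

/-- `μ` is an `s`-Carleson measure on `[0,1)`. -/
def IsCarleson (s : ℝ) (μ : Measure ℝ) : Prop :=
  ∃ C > 0, ∀ t ∈ Set.Ico (0:ℝ) 1, μ (Set.Ico t 1) ≤ ENNReal.ofReal (C * (1 - t) ^ s)

/-- `μ` is a vanishing `s`-Carleson measure on `[0,1)`. -/
def IsVanishingCarleson (s : ℝ) (μ : Measure ℝ) : Prop :=
  ∀ ε > 0, ∃ δ ∈ Set.Ico (0:ℝ) 1, ∀ t ∈ Set.Ico δ 1,
    μ (Set.Ico t 1) ≤ ENNReal.ofReal (ε * (1 - t) ^ s)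

/-- The moments `μ_n = ∫_{[0,1)} t^n dμ(t)`. -/
noncomputable def moment (μ : Measure ℝ) (n : ℕ) : ℝ :=
  ∫ t in Set.Ico (0:ℝ) 1, t ^ n ∂μ

/-!
Schur's test with the weight `w k = (k + 1/2)^(-1/2)` reduces the inequality to the row-sum bound
`∑ₖ w k / (n + k + 1) ≤ π w n`. Writing `x = n + 1/2`, the `k`-th term `1 / ((x + t) √t)` at
`t = k + 1/2` is dominated by the increment over `[t - 1, t]` of `(2/√x) arctan √(t/x)`, a primitive
of `1 / ((x + t) √t)`; these increments telescope to at most `(2/√x)(π/2) = π/√x`.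
-/

open Real Finset

theorem tsum_sq_le_tsum_mul_tsum_of_sq_le_mul {ι : Type*} {r f g : ι → ℝ}
    (hr : 0 ≤ r) (hf : 0 ≤ f) (hg : 0 ≤ g) (hfs : Summable f) (hgs : Summable g)
    (h : ∀ i, r i ^ 2 ≤ f i * g i) : (∑' i, r i) ^ 2 ≤ (∑' i, f i) * ∑' i, g i := by
  have hfg : 0 ≤ (∑' i, f i) * ∑' i, g i := mul_nonneg (tsum_nonneg hf) (tsum_nonneg hg)
  refine (Real.le_sqrt (tsum_nonneg hr) hfg).1 (Real.tsum_le_of_sum_le hr fun s => ?_)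
  refine (Real.le_sqrt (Finset.sum_nonneg fun i _ => hr i) hfg).2 ?_
  calc (∑ i ∈ s, r i) ^ 2 ≤ (∑ i ∈ s, f i) * ∑ i ∈ s, g i :=
        s.sum_sq_le_sum_mul_sum_of_sq_le_mul (fun i _ => hf i) (fun i _ => hg i) fun i _ => h i
    _ ≤ (∑' i, f i) * ∑' i, g i :=
        mul_le_mul (hfs.sum_le_tsum s fun i _ => hf i) (hgs.sum_le_tsum s fun i _ => hg i)
          (Finset.sum_nonneg fun i _ => hg i) (tsum_nonneg hf)

theorem schur_test {ι κ : Type*} {K : ι → κ → ℝ} {p : κ → ℝ} {q : ι → ℝ} {C₁ C₂ : ℝ}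
    (hK : ∀ i k, 0 ≤ K i k) (hp : ∀ k, 0 < p k) (hq : ∀ i, 0 < q i) (hC₁ : 0 ≤ C₁)
    (hrow_summable : ∀ i, Summable fun k => K i k * p k)
    (hrow : ∀ i, ∑' k, K i k * p k ≤ C₁ * q i)
    (hcol_summable : ∀ k, Summable fun i => K i k * q i)
    (hcol : ∀ k, ∑' i, K i k * q i ≤ C₂ * p k)
    {b : κ → ℝ} (hb : ∀ k, 0 ≤ b k) (hb2 : Summable fun k => b k ^ 2) :
    ∑' i, (∑' k, K i k * b k) ^ 2 ≤ C₁ * C₂ * ∑' k, b k ^ 2 := by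
  set g : ι → κ → ℝ := fun i k => K i k * (b k ^ 2 / p k)
  set F : ι → κ → ℝ := fun i k => q i * g i k
  have hg0 : ∀ i k, 0 ≤ g i k := fun i k =>
    mul_nonneg (hK i k) (div_nonneg (sq_nonneg _) (hp k).le)
  have hF0 : ∀ i k, 0 ≤ F i k := fun i k => mul_nonneg (hq i).le (hg0 i k)
  have hKq_le : ∀ i k, K i k * q i ≤ C₂ * p k := fun i k =>
    ((hcol_summable k).le_tsum i fun j _ => mul_nonneg (hK j k) (hq j).le).trans (hcol k)
  have hg_row : ∀ i, Summable (g i) := fun i =>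
    (hb2.mul_left (C₂ / q i)).of_nonneg_of_le (hg0 i) fun k => by
      simp only [g]
      rw [div_mul_eq_mul_div, le_div_iff₀ (hq i)]
      calc K i k * (b k ^ 2 / p k) * q i = K i k * q i * (b k ^ 2 / p k) := by ring
        _ ≤ C₂ * p k * (b k ^ 2 / p k) :=
            mul_le_mul_of_nonneg_right (hKq_le i k) (div_nonneg (sq_nonneg _) (hp k).le)
        _ = C₂ * b k ^ 2 := by field_simp [(hp k).ne']
  have hF_col : ∀ k, Summable fun i => F i k := fun k =>
    ((hcol_summable k).mul_right (b k ^ 2 / p k)).congr fun i => by simp only [F, g]; ring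
  have hF_col_le : ∀ k, ∑' i, F i k ≤ C₂ * b k ^ 2 := fun k => by
    calc ∑' i, F i k = (∑' i, K i k * q i) * (b k ^ 2 / p k) := by
          rw [← tsum_mul_right]; congr 1; ext i; simp only [F, g]; ring
      _ ≤ C₂ * p k * (b k ^ 2 / p k) := by
          gcongr
          · exact div_nonneg (sq_nonneg _) (hp k).le
          · exact hcol k
      _ = C₂ * b k ^ 2 := by field_simp [(hp k).ne']
  have hF_col_tsum : Summable fun k => ∑' i, F i k :=
    (hb2.mul_left C₂).of_nonneg_of_le (fun k => tsum_nonneg (hF0 · k)) hF_col_le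
  have hF : Summable (Function.uncurry fun k i => F i k) :=
    (summable_prod_of_nonneg fun x => hF0 x.2 x.1).2 ⟨hF_col, hF_col_tsum⟩
  have hF_row_tsum : Summable fun i => ∑' k, F i k := hF.prod_symm.prod
  have hrow_sq : ∀ i, (∑' k, K i k * b k) ^ 2 ≤ C₁ * ∑' k, F i k := fun i => by
    calc (∑' k, K i k * b k) ^ 2 ≤ (∑' k, K i k * p k) * ∑' k, g i k :=
          tsum_sq_le_tsum_mul_tsum_of_sq_le_mul (fun k => mul_nonneg (hK i k) (hb k))
            (fun k => mul_nonneg (hK i k) (hp k).le) (hg0 i) (hrow_summable i) (hg_row i)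
            fun k => le_of_eq (by simp only [g]; field_simp [(hp k).ne'])
      _ ≤ C₁ * q i * ∑' k, g i k := by gcongr; exacts [tsum_nonneg (hg0 i), hrow i]
      _ = C₁ * ∑' k, F i k := by rw [tsum_mul_left, mul_assoc]
  calc ∑' i, (∑' k, K i k * b k) ^ 2 ≤ ∑' i, C₁ * ∑' k, F i k :=
        Summable.tsum_le_tsum hrow_sq
          ((hF_row_tsum.mul_left C₁).of_nonneg_of_le (fun i => sq_nonneg _) hrow_sq)
          (hF_row_tsum.mul_left C₁)
    _ = C₁ * ∑' k, ∑' i, F i k := by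
        rw [tsum_mul_left, Summable.tsum_comm' hF hF_col fun i => (hg_row i).mul_left (q i)]
    _ ≤ C₁ * ∑' k, C₂ * b k ^ 2 := mul_le_mul_of_nonneg_left
        (Summable.tsum_le_tsum hF_col_le hF_col_tsum (hb2.mul_left C₂)) hC₁
    _ = C₁ * C₂ * ∑' k, b k ^ 2 := by rw [tsum_mul_left, mul_assoc]

theorem sub_div_one_add_sq_le_arctan_sub_arctan {a b : ℝ} (ha : 0 ≤ a) (hab : a ≤ b) :
    (b - a) / (1 + b ^ 2) ≤ Real.arctan b - Real.arctan a := by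
  rw [← integral_one_div_one_add_sq]
  have hconst : (b - a) / (1 + b ^ 2) = ∫ _ in a..b, 1 / (1 + b ^ 2) := by
    rw [intervalIntegral.integral_const, smul_eq_mul]; ring
  rw [hconst]
  refine intervalIntegral.integral_mono_on hab intervalIntegrable_const
    ((continuous_const.div (by fun_prop) fun x => by positivity).intervalIntegrable a b)
    fun x hx => ?_
  gcongr
  exacts [ha.trans hx.1, hx.2]

/-- For `t < 1` the junk value `√(t - 1) = 0` makes the right side the increment over `[0, t]`. -/
theorem inv_mul_inv_sqrt_le_arctan_sub_arctan {x t : ℝ} (hx : 0 < x) (ht : 1 / 2 ≤ t) :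
    (x + t)⁻¹ * (√t)⁻¹ ≤ 2 / √x * (Real.arctan (√t / √x) - Real.arctan (√(t - 1) / √x)) := by
  set s := √x
  set b := √t
  set a := √(t - 1)
  have hs : 0 < s := sqrt_pos.2 hx
  have hs2 : s ^ 2 = x := sq_sqrt hx.le
  have hb : 0 < b := sqrt_pos.2 (by linarith)
  have hb2 : b ^ 2 = t := sq_sqrt (by linarith)
  have hab : a * b ≤ t - 1 / 2 := by
    rw [← sqrt_mul' _ (by linarith), ← sqrt_sq (by linarith : 0 ≤ t - 1 / 2)]
    exact sqrt_le_sqrt (by nlinarith)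
  have hgap : 1 ≤ 2 * b * (b - a) := by nlinarith
  have harctan :
      (b / s - a / s) / (1 + (b / s) ^ 2) ≤ Real.arctan (b / s) - Real.arctan (a / s) :=
    sub_div_one_add_sq_le_arctan_sub_arctan (by positivity)
      (div_le_div_of_nonneg_right (sqrt_le_sqrt (by linarith)) hs.le)
  calc (x + t)⁻¹ * b⁻¹ ≤ 2 * (b - a) / (x + t) := by
        rw [← mul_inv, inv_eq_one_div, div_le_div_iff₀ (by positivity) (by positivity)]
        nlinarith
    _ = 2 / s * ((b / s - a / s) / (1 + (b / s) ^ 2)) := by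
        rw [← hs2, ← hb2]; field_simp
    _ ≤ 2 / s * (Real.arctan (b / s) - Real.arctan (a / s)) := by gcongr

theorem summable_and_tsum_inv_mul_inv_sqrt_le {x : ℝ} (hx : 0 < x) :
    Summable (fun k : ℕ => (x + (k + 1 / 2))⁻¹ * (√(k + 1 / 2))⁻¹) ∧
      ∑' k : ℕ, (x + (k + 1 / 2))⁻¹ * (√(k + 1 / 2))⁻¹ ≤ π / √x := by
  have hf : ∀ k : ℕ, 0 ≤ (x + (k + 1 / 2))⁻¹ * (√(k + 1 / 2))⁻¹ := fun k => by positivity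
  set G : ℕ → ℝ := fun k => 2 / √x * Real.arctan (√(k - 1 / 2) / √x)
  have hpartial : ∀ N, ∑ k ∈ range N, (x + (k + 1 / 2))⁻¹ * (√(k + 1 / 2))⁻¹ ≤ π / √x := by
    intro N
    have hG0 : G 0 = 0 := by simp [G, sqrt_eq_zero_of_nonpos] -- junk value `√(-1/2) = 0`
    have hGN : G N ≤ π / √x := by
      calc G N ≤ 2 / √x * (π / 2) := by
            simp only [G]; gcongr; exact (arctan_lt_pi_div_two _).le
        _ = π / √x := by ring
    calc ∑ k ∈ range N, (x + (k + 1 / 2))⁻¹ * (√(k + 1 / 2))⁻¹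
        ≤ ∑ k ∈ range N, (G (k + 1) - G k) := by
          refine sum_le_sum fun k _ => ?_
          have h := inv_mul_inv_sqrt_le_arctan_sub_arctan hx (t := k + 1 / 2)
            (le_add_of_nonneg_left k.cast_nonneg)
          rw [show (k : ℝ) + 1 / 2 - 1 = k - 1 / 2 by ring] at h
          simpa only [G, ← mul_sub, Nat.cast_succ,
            show (k : ℝ) + 1 - 1 / 2 = k + 1 / 2 by ring] using h
      _ = G N - G 0 := sum_range_sub G N
      _ ≤ π / √x := by rw [hG0, sub_zero]; exact hGN
  exact ⟨summable_of_sum_range_le hf hpartial, Real.tsum_le_of_sum_range_le hf hpartial⟩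

theorem summable_and_tsum_hilbert_kernel_mul_le (n : ℕ) :
    Summable (fun k : ℕ => ((n : ℝ) + k + 1)⁻¹ * (√(k + 1 / 2))⁻¹) ∧
      ∑' k : ℕ, ((n : ℝ) + k + 1)⁻¹ * (√(k + 1 / 2))⁻¹ ≤ π * (√(n + 1 / 2))⁻¹ := by
  have h : ∀ k : ℕ, (n : ℝ) + k + 1 = n + 1 / 2 + (k + 1 / 2) := fun k => by ring
  simp only [h, ← div_eq_mul_inv]
  exact summable_and_tsum_inv_mul_inv_sqrt_le (by positivity)

theorem stmt15 (a : ℕ → ℂ) (ha : Summable (fun k : ℕ => ‖a k‖ ^ 2)) :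
    ∑' n : ℕ, (∑' k : ℕ, ‖a k‖ / ((n : ℝ) + (k : ℝ) + 1)) ^ 2 ≤
      Real.pi ^ 2 * ∑' k : ℕ, ‖a k‖ ^ 2 := by
  have hcol (k : ℕ) : Summable (fun n : ℕ => ((n : ℝ) + k + 1)⁻¹ * (√(n + 1 / 2))⁻¹) ∧
      ∑' n : ℕ, ((n : ℝ) + k + 1)⁻¹ * (√(n + 1 / 2))⁻¹ ≤ π * (√(k + 1 / 2))⁻¹ := by
    simpa only [add_right_comm _ (k : ℝ), add_comm (k : ℝ)] using
      summable_and_tsum_hilbert_kernel_mul_le k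
  have hschur := schur_test (K := fun n k : ℕ => ((n : ℝ) + k + 1)⁻¹)
    (p := fun k => (√(k + 1 / 2))⁻¹) (q := fun n => (√(n + 1 / 2))⁻¹)
    (fun n k => by positivity) (fun k => by positivity) (fun n => by positivity) pi_pos.le
    (fun n => (summable_and_tsum_hilbert_kernel_mul_le n).1)
    (fun n => (summable_and_tsum_hilbert_kernel_mul_le n).2)
    (fun k => (hcol k).1) (fun k => (hcol k).2) (fun k => norm_nonneg (a k)) ha
  simpa only [div_eq_inv_mul, sq] using hschur
end

section
/- Let 1 < p ≤ q < ∞, 1/q + 1/q' = 1, γ > 0, and let μ be a positive Borel measure on [0,1) that is a (1/p + 1/q' + 1 + γ)-Carleson measure. Set s = 1 + p/q' and s' = 1 + q'/p. Then ∫_{[0,1)} (1-t)^{-s'/q'} dν(t) < ∞ where dν(t) = (1-t)^{-1} dμ(t), and there is a constant C with |∫_{[0,1)} conj(f(t)) (g(t)+t g'(t)) dμ(t)| ≤ C ||f||_{H^p} ||g||_{H^{q'}} for all f ∈ H^p, g ∈ H^{q'}. -/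
open MeasureTheory Metric Set Complex

/-!
Everything rests on two growth estimates for `h ∈ H^s`, `1 < s`. Cauchy's formula on the circle
of radius `(1 + |z|) / 2` and Hölder's inequality give `|h z| ≲ (1 - |z|) ^ (-1/s) ‖h‖_{H^s}`:
the Cauchy kernel on that circle is `≲ ((1 - |z|) + |θ - arg z|)⁻¹`, so its `L^{s'}` norm is
`≲ (1 - |z|) ^ (1/s' - 1) = (1 - |z|) ^ (-1/s)`. Cauchy's estimate on the disc of radius
`(1 - |z|) / 2` about `z` then gives `|h' z| ≲ (1 - |z|) ^ (-1/s - 1) ‖h‖_{H^s}`.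

Hence the integrand is `≲ (1 - t) ^ (-a) ‖f‖_{H^p} ‖g‖_{H^{q'}}` with `a = 1/p + 1/q' + 1`,
which is also the weight of the first claim. As `μ` is Carleson of order `a + γ > a`,
dominating `(1 - t) ^ (-a)` by `∑ₙ 2^{(n+1)a} 1_{[1 - 2^{-n}, 1)}` bounds its `μ`-integral by a
convergent geometric series.
-/

theorem Mp_nonneg (s : ℝ) (f : ℂ → ℂ) (r : ℝ) : 0 ≤ Mp s f r := by
  unfold Mp
  have := Real.pi_pos
  refine Real.rpow_nonneg (mul_nonneg (by positivity) ?_) _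
  exact intervalIntegral.integral_nonneg (by positivity) fun θ _ => by positivity

theorem MemHp.Mp_le_hardyNorm {s : ℝ} {f : ℂ → ℂ} (hf : MemHp s f) {r : ℝ}
    (hr : r ∈ Set.Ioo (0:ℝ) 1) : Mp s f r ≤ hardyNorm s f :=
  le_ciSup hf.2 ⟨r, hr⟩

theorem MemHp.hardyNorm_nonneg {s : ℝ} {f : ℂ → ℂ} (hf : MemHp s f) : 0 ≤ hardyNorm s f :=
  (Mp_nonneg s f (1 / 2)).trans (hf.Mp_le_hardyNorm ⟨by norm_num, by norm_num⟩)

open Real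

theorem integral_add_mul_rpow_neg_le {b c d L : ℝ} (hb : 1 < b) (hc : 0 < c) (hd : 0 < d)
    (hL : 0 ≤ L) : ∫ θ in (0:ℝ)..L, (d + c * θ) ^ (-b) ≤ d ^ (1 - b) / (c * (b - 1)) := by
  have hdL : 0 < d + c * L := by positivity
  rw [intervalIntegral.integral_comp_add_mul (fun x => x ^ (-b)) hc.ne', integral_rpow
    (Or.inr ⟨by linarith, by simp [Set.mem_uIcc]; constructor <;> intro <;> linarith⟩)]
  have hb₀ : 1 - b ≠ 0 := by linarith
  have hb₁ : b - 1 ≠ 0 := by linarith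
  calc c⁻¹ • (((d + c * L) ^ (-b + 1) - (d + c * 0) ^ (-b + 1)) / (-b + 1))
      = (d ^ (1 - b) - (d + c * L) ^ (1 - b)) / (c * (b - 1)) := by
        rw [smul_eq_mul, mul_zero, add_zero, neg_add_eq_sub]
        field_simp
        ring
    _ ≤ d ^ (1 - b) / (c * (b - 1)) :=
        div_le_div_of_nonneg_right (sub_le_self _ (by positivity)) (by positivity)

theorem norm_circleMap_sub_ofReal_sq (r t θ : ℝ) :
    ‖circleMap 0 r θ - t‖ ^ 2 = (r - t) ^ 2 + 2 * r * t * (1 - Real.cos θ) := by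
  rw [Complex.sq_norm, Complex.normSq_apply]
  simp [circleMap, Complex.exp_re, Complex.exp_im]
  linear_combination r ^ 2 * Real.sin_sq_add_cos_sq θ

theorem add_abs_le_norm_circleMap_sub_ofReal {t θ : ℝ} (ht₀ : 0 ≤ t) (ht₁ : t < 1)
    (hθ : |θ| ≤ π) : (1 - t) / 2 + |θ| ≤ 10 * ‖circleMap 0 ((1 + t) / 2) θ - t‖ := by
  have hπ := pi_lt_d2
  have hcos := cos_le_one_sub_mul_cos_sq hθ
  have hsq := norm_circleMap_sub_ofReal_sq ((1 + t) / 2) t θ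
  have hθ₀ := abs_nonneg θ
  have hθsq : θ ^ 2 = |θ| ^ 2 := (sq_abs θ).symm
  refine (pow_le_pow_iff_left₀ (by linarith) (by positivity) two_ne_zero).mp ?_
  rw [mul_pow, hsq]
  -- for small `t` the radial gap `r - t` alone dominates; otherwise `1 - cos θ ≳ θ ^ 2` does
  rcases le_total t (1 / 4) with ht | ht
  · have : 0 ≤ 2 * ((1 + t) / 2) * t * (1 - Real.cos θ) := by
      have := Real.cos_le_one θ
      have : 0 ≤ 1 - Real.cos θ := by linarith
      positivity
    nlinarith
  · have hgrowth : θ ^ 2 / 32 ≤ 2 * ((1 + t) / 2) * t * (1 - Real.cos θ) := by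
      have h1 : 2 / π ^ 2 * θ ^ 2 ≤ 1 - Real.cos θ := by linarith
      have h2 : 1 / 8 ≤ 2 / π ^ 2 := by
        rw [div_le_div_iff₀ (by norm_num) (by positivity)]; nlinarith [pi_pos]
      have h3 : 5 / 16 ≤ 2 * ((1 + t) / 2) * t := by nlinarith
      have h4 : 1 / 8 * θ ^ 2 ≤ 2 / π ^ 2 * θ ^ 2 := by gcongr
      nlinarith [mul_le_mul h3 (h4.trans h1) (by positivity) (by positivity)]
    nlinarith [sq_nonneg ((1 - t) / 2 - |θ|)]

theorem integral_rpow_neg_add_abs_le {b d L : ℝ} (hb : 1 < b) (hd : 0 < d) (hL : 0 ≤ L) :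
    ∫ θ in -L..L, (d + |θ|) ^ (-b) ≤ 2 * (d ^ (1 - b) / (b - 1)) := by
  have hcont : Continuous fun θ : ℝ => (d + |θ|) ^ (-b) :=
    (continuous_const.add continuous_abs).rpow_const fun θ =>
      Or.inl (add_pos_of_pos_of_nonneg hd (abs_nonneg θ)).ne'
  have hright : ∫ θ in (0:ℝ)..L, (d + |θ|) ^ (-b) ≤ d ^ (1 - b) / (b - 1) := by
    rw [intervalIntegral.integral_congr (g := fun θ => (d + 1 * θ) ^ (-b)) fun θ hθ => by
      rw [Set.uIcc_of_le hL] at hθ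
      simp [abs_of_nonneg hθ.1]]
    simpa using integral_add_mul_rpow_neg_le hb one_pos hd hL
  have hleft : ∫ θ in -L..0, (d + |θ|) ^ (-b) = ∫ θ in (0:ℝ)..L, (d + |θ|) ^ (-b) := by
    simpa using (intervalIntegral.integral_comp_neg (a := 0) (b := L)
      fun θ => (d + |θ|) ^ (-b)).symm
  rw [← intervalIntegral.integral_add_adjacent_intervals (hcont.intervalIntegrable _ _)
    (hcont.intervalIntegrable _ _), hleft]
  linarith

theorem integral_norm_circleMap_sub_ofReal_rpow_neg_le {b t : ℝ} (hb : 1 < b) (ht₀ : 0 ≤ t)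
    (ht₁ : t < 1) :
    ∫ θ in -π..π, ‖circleMap 0 ((1 + t) / 2) θ - t‖ ^ (-b)
      ≤ 2 * 10 ^ b / (b - 1) * ((1 - t) / 2) ^ (1 - b) := by
  have hd : 0 < (1 - t) / 2 := by linarith
  have hbound : ∀ θ ∈ Set.Icc (-π) π, ‖circleMap 0 ((1 + t) / 2) θ - t‖ ^ (-b)
      ≤ 10 ^ b * ((1 - t) / 2 + |θ|) ^ (-b) := by
    intro θ hθ
    have hlow := add_abs_le_norm_circleMap_sub_ofReal ht₀ ht₁ (abs_le.mpr hθ)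
    have hpos : 0 < (1 - t) / 2 + |θ| := by positivity
    calc ‖circleMap 0 ((1 + t) / 2) θ - t‖ ^ (-b)
        = 10 ^ b * (10 * ‖circleMap 0 ((1 + t) / 2) θ - t‖) ^ (-b) := by
          rw [mul_rpow (by norm_num) (norm_nonneg _), ← mul_assoc,
            ← rpow_add (by norm_num), add_neg_cancel, rpow_zero, one_mul]
      _ ≤ 10 ^ b * ((1 - t) / 2 + |θ|) ^ (-b) :=
          mul_le_mul_of_nonneg_left (rpow_le_rpow_of_nonpos hpos hlow (by linarith))
            (by positivity)
  have hint : IntervalIntegrable (fun θ => ‖circleMap 0 ((1 + t) / 2) θ - t‖ ^ (-b))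
      volume (-π) π := by
    refine ContinuousOn.intervalIntegrable fun θ hθ => ?_
    rw [Set.uIcc_of_le (by linarith [pi_pos])] at hθ
    have hlow := add_abs_le_norm_circleMap_sub_ofReal ht₀ ht₁ (abs_le.mpr hθ)
    have hpos : 0 < ‖circleMap 0 ((1 + t) / 2) θ - t‖ := by linarith [abs_nonneg θ]
    exact (((continuous_circleMap 0 _).sub continuous_const).norm.continuousAt.rpow_const
      (Or.inl hpos.ne')).continuousWithinAt
  have hcont : Continuous fun θ : ℝ => ((1 - t) / 2 + |θ|) ^ (-b) :=
    (continuous_const.add continuous_abs).rpow_const fun θ =>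
      Or.inl (add_pos_of_pos_of_nonneg hd (abs_nonneg θ)).ne'
  calc ∫ θ in -π..π, ‖circleMap 0 ((1 + t) / 2) θ - t‖ ^ (-b)
      ≤ ∫ θ in -π..π, 10 ^ b * ((1 - t) / 2 + |θ|) ^ (-b) :=
        intervalIntegral.integral_mono_on (by linarith [pi_pos]) hint
          ((hcont.intervalIntegrable _ _).const_mul _) hbound
    _ ≤ 10 ^ b * (2 * (((1 - t) / 2) ^ (1 - b) / (b - 1))) := by
        rw [intervalIntegral.integral_const_mul]
        gcongr
        exact integral_rpow_neg_add_abs_le hb hd pi_pos.le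
    _ = 2 * 10 ^ b / (b - 1) * ((1 - t) / 2) ^ (1 - b) := by ring

theorem integral_comp_norm_circleMap_sub_eq (F : ℝ → ℝ) (R : ℝ) (z : ℂ) :
    ∫ θ in (0:ℝ)..2 * π, F ‖circleMap 0 R θ - z‖
      = ∫ θ in -π..π, F ‖circleMap 0 R θ - ‖z‖‖ := by
  have hrot : ∀ θ, ‖circleMap 0 R θ - z‖ = ‖circleMap 0 R (θ - z.arg) - ‖z‖‖ := by
    intro θ
    have : circleMap 0 R θ - z
        = Complex.exp (z.arg * Complex.I) * (circleMap 0 R (θ - z.arg) - ‖z‖) := by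
      conv_lhs => rw [← Complex.norm_mul_exp_arg_mul_I z]
      simp only [circleMap, zero_add, mul_sub]
      rw [mul_left_comm, ← Complex.exp_add]
      push_cast
      ring_nf
    rw [this, norm_mul, Complex.norm_exp_ofReal_mul_I, one_mul]
  have hper : Function.Periodic (fun θ => F ‖circleMap 0 R θ - ‖z‖‖) (2 * π) := fun θ => by
    simp only [periodic_circleMap 0 R θ]
  calc ∫ θ in (0:ℝ)..2 * π, F ‖circleMap 0 R θ - z‖
      = ∫ θ in (0:ℝ)..2 * π, F ‖circleMap 0 R (θ - z.arg) - ‖z‖‖ := by simp only [hrot]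
    _ = ∫ θ in 0 - z.arg..0 - z.arg + 2 * π, F ‖circleMap 0 R θ - ‖z‖‖ := by
        rw [intervalIntegral.integral_comp_sub_right (fun θ => F ‖circleMap 0 R θ - ‖z‖‖)]
        ring_nf
    _ = ∫ θ in -π..π, F ‖circleMap 0 R θ - ‖z‖‖ := by
        rw [hper.intervalIntegral_add_eq _ (-π)]
        ring_nf

theorem rpow_integral_norm_circleMap_rpow_eq (s : ℝ) (f : ℂ → ℂ) (r : ℝ) :
    (∫ θ in (0:ℝ)..2 * π, ‖f (circleMap 0 r θ)‖ ^ s) ^ (1 / s) = (2 * π) ^ (1 / s) * Mp s f r := by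
  have hπ := pi_pos
  have hI : 0 ≤ ∫ θ in (0:ℝ)..2 * π, ‖f (circleMap 0 r θ)‖ ^ s :=
    intervalIntegral.integral_nonneg (by positivity) fun θ _ => by positivity
  rw [Mp]
  simp only [circleMap, zero_add] at hI ⊢
  rw [← mul_rpow (by positivity) (mul_nonneg (by positivity) hI), ← mul_assoc,
    mul_one_div_cancel (by positivity), one_mul]

theorem DiffContOnCl.two_pi_mul_norm_le_integral {E : Type*} [NormedAddCommGroup E]
    [NormedSpace ℂ E] [CompleteSpace E] {f : ℂ → E} {c w : ℂ} {R : ℝ}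
    (hf : DiffContOnCl ℂ f (Metric.ball c R)) (hw : w ∈ Metric.ball c R) :
    2 * π * ‖f w‖
      ≤ ∫ θ in (0:ℝ)..2 * π, R * ‖circleMap c R θ - w‖⁻¹ * ‖f (circleMap c R θ)‖ := by
  have hR : 0 < R := Metric.pos_of_mem_ball hw
  calc 2 * π * ‖f w‖ = ‖(2 * π * Complex.I : ℂ) • f w‖ := by
        simp [norm_smul, abs_of_pos pi_pos]
    _ = ‖∮ z in C(c, R), (z - w)⁻¹ • f z‖ := by rw [hf.circleIntegral_sub_inv_smul hw]
    _ ≤ ∫ θ in (0:ℝ)..2 * π,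
          ‖deriv (circleMap c R) θ • (circleMap c R θ - w)⁻¹ • f (circleMap c R θ)‖ :=
        intervalIntegral.norm_integral_le_integral_norm two_pi_pos.le
    _ = _ := by simp [deriv_circleMap, norm_smul, abs_of_pos hR, mul_assoc]

theorem Continuous.memLp_restrict_Ioc {f : ℝ → ℝ} (hf : Continuous f) (p : ENNReal) (a b : ℝ) :
    MemLp f p (volume.restrict (Set.Ioc a b)) := by
  obtain ⟨C, hC⟩ := (isCompact_Icc (a := a) (b := b)).exists_bound_of_continuousOn hf.continuousOn
  exact MemLp.of_bound hf.aestronglyMeasurable C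
    ((ae_restrict_mem measurableSet_Ioc).mono fun x hx =>
      hC x (Set.Ioc_subset_Icc_self hx))

theorem intervalIntegral.integral_mul_le_Lp_mul_Lq_of_continuous {p q a b : ℝ}
    (hpq : p.HolderConjugate q) (hab : a ≤ b) {f g : ℝ → ℝ} (hf : Continuous f)
    (hg : Continuous g) (hf₀ : 0 ≤ f) (hg₀ : 0 ≤ g) :
    ∫ x in a..b, f x * g x ≤ (∫ x in a..b, f x ^ p) ^ (1 / p) * (∫ x in a..b, g x ^ q) ^ (1 / q) := by
  simp only [intervalIntegral.integral_of_le hab]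
  exact integral_mul_le_Lp_mul_Lq_of_nonneg hpq (.of_forall hf₀) (.of_forall hg₀)
    (hf.memLp_restrict_Ioc _ a b) (hg.memLp_restrict_Ioc _ a b)

theorem integral_mul_norm_circleMap_sub_inv_rpow_le {b : ℝ} (hb : 1 < b) {z : ℂ} (hz : ‖z‖ < 1) :
    ∫ θ in (0:ℝ)..2 * π, ((1 + ‖z‖) / 2 * ‖circleMap 0 ((1 + ‖z‖) / 2) θ - z‖⁻¹) ^ b
      ≤ 2 * 10 ^ b / (b - 1) * ((1 - ‖z‖) / 2) ^ (1 - b) := by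
  have hr₀ : 0 ≤ (1 + ‖z‖) / 2 := by positivity
  have hrb : ((1 + ‖z‖) / 2) ^ b ≤ 1 := rpow_le_one hr₀ (by linarith) (by linarith)
  have hI : 0 ≤ ∫ θ in (0:ℝ)..2 * π, ‖circleMap 0 ((1 + ‖z‖) / 2) θ - z‖ ^ (-b) :=
    intervalIntegral.integral_nonneg two_pi_pos.le fun θ _ => by positivity
  have hkernel : ∫ θ in (0:ℝ)..2 * π, ‖circleMap 0 ((1 + ‖z‖) / 2) θ - z‖ ^ (-b)
      ≤ 2 * 10 ^ b / (b - 1) * ((1 - ‖z‖) / 2) ^ (1 - b) := by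
    rw [integral_comp_norm_circleMap_sub_eq (fun x => x ^ (-b))]
    exact integral_norm_circleMap_sub_ofReal_rpow_neg_le hb (norm_nonneg z) hz
  calc ∫ θ in (0:ℝ)..2 * π, ((1 + ‖z‖) / 2 * ‖circleMap 0 ((1 + ‖z‖) / 2) θ - z‖⁻¹) ^ b
      = ((1 + ‖z‖) / 2) ^ b * ∫ θ in (0:ℝ)..2 * π, ‖circleMap 0 ((1 + ‖z‖) / 2) θ - z‖ ^ (-b) := by
        rw [← intervalIntegral.integral_const_mul]
        congr 1 with θ
        rw [mul_rpow hr₀ (by positivity), inv_rpow (norm_nonneg _), rpow_neg (norm_nonneg _)]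
    _ ≤ 1 * (2 * 10 ^ b / (b - 1) * ((1 - ‖z‖) / 2) ^ (1 - b)) :=
        mul_le_mul hrb hkernel hI zero_le_one
    _ = 2 * 10 ^ b / (b - 1) * ((1 - ‖z‖) / 2) ^ (1 - b) := one_mul _

theorem DiffContOnCl.two_pi_mul_norm_le_of_holderConjugate {f : ℂ → ℂ} {r s s' : ℝ} {z : ℂ}
    (hf : DiffContOnCl ℂ f (Metric.ball 0 r)) (hz : ‖z‖ < r) (hss' : s'.HolderConjugate s) :
    2 * π * ‖f z‖ ≤ (∫ θ in (0:ℝ)..2 * π, (r * ‖circleMap 0 r θ - z‖⁻¹) ^ s') ^ (1 / s')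
      * (∫ θ in (0:ℝ)..2 * π, ‖f (circleMap 0 r θ)‖ ^ s) ^ (1 / s) := by
  have hr : 0 < r := (norm_nonneg z).trans_lt hz
  have hne : ∀ θ, ‖circleMap 0 r θ - z‖ ≠ 0 := fun θ => by
    have := norm_sub_norm_le (circleMap 0 r θ) z
    rw [norm_circleMap_zero, abs_of_pos hr] at this
    linarith
  have hK : Continuous fun θ => r * ‖circleMap 0 r θ - z‖⁻¹ :=
    continuous_const.mul (((continuous_circleMap 0 r).sub continuous_const).norm.inv₀ hne)
  have hF : Continuous fun θ => ‖f (circleMap 0 r θ)‖ :=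
    (hf.continuousOn.comp_continuous (continuous_circleMap 0 r) fun θ => by
      rw [closure_ball 0 hr.ne']
      exact circleMap_mem_closedBall 0 hr.le θ).norm
  exact (hf.two_pi_mul_norm_le_integral (mem_ball_zero_iff.mpr hz)).trans
    (intervalIntegral.integral_mul_le_Lp_mul_Lq_of_continuous hss' two_pi_pos.le hK hF
      (fun θ => by positivity) (fun θ => by positivity))

theorem exists_norm_le_one_sub_rpow_mul_hardyNorm {s : ℝ} (hs : 1 < s) :
    ∃ C > 0, ∀ h : ℂ → ℂ, MemHp s h → ∀ z : ℂ, ‖z‖ < 1 →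
      ‖h z‖ ≤ C * (1 - ‖z‖) ^ (-(1 / s)) * hardyNorm s h := by
  set s' := s.conjExponent
  have hconj : s'.HolderConjugate s := (HolderConjugate.conjExponent hs).symm
  have hs' : 1 < s' := hconj.lt
  set B := 2 * 10 ^ s' / (s' - 1)
  have hB : 0 < B := div_pos (by positivity) hconj.sub_one_pos
  have hπ := pi_pos
  refine ⟨(2 * π)⁻¹ * B ^ (1 / s') * 2 ^ (1 / s) * (2 * π) ^ (1 / s), by positivity, ?_⟩
  intro h hh z hz
  set r := (1 + ‖z‖) / 2 with hr_def
  have hr : r ∈ Set.Ioo (0:ℝ) 1 := ⟨by positivity, by linarith [hr_def]⟩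
  have hd : 0 < 1 - ‖z‖ := by linarith
  have hdiff : DiffContOnCl ℂ h (Metric.ball 0 r) :=
    hh.1.differentiableOn.diffContOnCl_ball (Metric.closedBall_subset_ball hr.2)
  have hKint : (∫ θ in (0:ℝ)..2 * π, (r * ‖circleMap 0 r θ - z‖⁻¹) ^ s') ^ (1 / s')
      ≤ B ^ (1 / s') * (2 ^ (1 / s) * (1 - ‖z‖) ^ (-(1 / s))) := by
    have hexp : (1 - s') * (1 / s') = -(1 / s) := by
      have := hconj.inv_add_inv_eq_one
      field_simp at this ⊢
      linarith
    calc _ ≤ (B * ((1 - ‖z‖) / 2) ^ (1 - s')) ^ (1 / s') :=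
          rpow_le_rpow (intervalIntegral.integral_nonneg two_pi_pos.le fun θ _ => by positivity)
            (integral_mul_norm_circleMap_sub_inv_rpow_le hs' hz) (by positivity)
      _ = B ^ (1 / s') * (2 ^ (1 / s) * (1 - ‖z‖) ^ (-(1 / s))) := by
          rw [mul_rpow hB.le (by positivity), ← rpow_mul (by positivity), hexp,
            div_rpow hd.le zero_le_two, rpow_neg zero_le_two, div_inv_eq_mul]
          ring
  have hHint : (∫ θ in (0:ℝ)..2 * π, ‖h (circleMap 0 r θ)‖ ^ s) ^ (1 / s)
      ≤ (2 * π) ^ (1 / s) * hardyNorm s h := by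
    rw [rpow_integral_norm_circleMap_rpow_eq]
    exact mul_le_mul_of_nonneg_left (hh.Mp_le_hardyNorm hr) (by positivity)
  calc ‖h z‖ = (2 * π)⁻¹ * (2 * π * ‖h z‖) := by field_simp
    _ ≤ (2 * π)⁻¹ * ((B ^ (1 / s') * (2 ^ (1 / s) * (1 - ‖z‖) ^ (-(1 / s))))
          * ((2 * π) ^ (1 / s) * hardyNorm s h)) := by
        refine mul_le_mul_of_nonneg_left ((hdiff.two_pi_mul_norm_le_of_holderConjugate
          (by linarith [hr_def]) hconj).trans (mul_le_mul hKint hHint (rpow_nonneg ?_ _)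
          (by positivity))) (by positivity)
        exact intervalIntegral.integral_nonneg two_pi_pos.le fun θ _ => by positivity
    _ = _ := by ring

theorem IsCarleson.integrableOn_one_sub_rpow_neg {s a : ℝ} {μ : Measure ℝ} (hμ : IsCarleson s μ)
    (ha : 0 ≤ a) (has : a < s) : IntegrableOn (fun t : ℝ => (1 - t) ^ (-a)) (Ico 0 1) μ := by
  obtain ⟨C, hC, hμ⟩ := hμ
  set J : ℕ → Set ℝ := fun n => Ico (1 - (1 / 2) ^ n) 1
  set ρ : ℝ := 2 ^ a * (1 / 2) ^ s with hρ_def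
  have hρ : ρ < 1 := by
    have : (2:ℝ) ^ a < 2 ^ s := rpow_lt_rpow_of_exponent_lt one_lt_two has
    rw [hρ_def, div_rpow zero_le_one zero_le_two, one_rpow, ← div_eq_mul_one_div,
      div_lt_one (by positivity)]
    exact this
  have hdom : ∀ t ∈ Ico (0:ℝ) 1, ENNReal.ofReal ((1 - t) ^ (-a))
      ≤ ∑' n, (J n).indicator (fun _ => ENNReal.ofReal ((2 ^ a) ^ (n + 1))) t := by
    rintro t ⟨ht₀, ht₁⟩
    have hd : 0 < 1 - t := by linarith
    obtain ⟨n, hn, hn'⟩ := exists_nat_pow_near ((one_le_inv₀ hd).mpr (by linarith)) one_lt_two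
    have htJ : t ∈ J n := by
      refine ⟨?_, ht₁⟩
      have : 1 - t ≤ (1 / 2) ^ n := by
        rw [one_div, inv_pow]; exact (le_inv_comm₀ hd (by positivity)).mpr hn
      linarith
    refine le_trans ?_ (ENNReal.le_tsum n)
    rw [indicator_of_mem htJ]
    refine ENNReal.ofReal_le_ofReal ?_
    rw [rpow_neg hd.le, ← inv_rpow hd.le, rpow_pow_comm zero_le_two]
    exact rpow_le_rpow (by positivity) hn'.le ha
  have hterm : ∀ n : ℕ, ENNReal.ofReal ((2 ^ a) ^ (n + 1)) * μ (J n)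
      ≤ ENNReal.ofReal (C * 2 ^ a) * ENNReal.ofReal ρ ^ n := by
    intro n
    have hpow₀ : (0:ℝ) < (1 / 2) ^ n := by positivity
    have hpow₁ : ((1:ℝ) / 2) ^ n ≤ 1 := pow_le_one₀ (by norm_num) (by norm_num)
    have hJ : μ (J n) ≤ ENNReal.ofReal (C * ((1 / 2) ^ n) ^ s) := by
      have := hμ (1 - (1 / 2) ^ n) ⟨by linarith, by linarith⟩
      rwa [sub_sub_cancel] at this
    calc ENNReal.ofReal ((2 ^ a) ^ (n + 1)) * μ (J n)
        ≤ ENNReal.ofReal ((2 ^ a) ^ (n + 1)) * ENNReal.ofReal (C * ((1 / 2) ^ n) ^ s) := by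
          gcongr
      _ = ENNReal.ofReal (C * 2 ^ a) * ENNReal.ofReal ρ ^ n := by
          rw [← ENNReal.ofReal_mul (by positivity), ← ENNReal.ofReal_pow (by positivity),
            ← ENNReal.ofReal_mul (by positivity), ← rpow_pow_comm (by norm_num), hρ_def]
          ring_nf
  refine ⟨(ContinuousOn.rpow_const (continuousOn_const.sub continuousOn_id) fun t ht =>
    Or.inl (sub_ne_zero.mpr ht.2.ne')).aestronglyMeasurable measurableSet_Ico, ?_⟩
  rw [hasFiniteIntegral_iff_ofReal ((ae_restrict_mem measurableSet_Ico).mono fun t ht =>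
    rpow_nonneg (by linarith [ht.2]) _)]
  calc ∫⁻ t in Ico 0 1, ENNReal.ofReal ((1 - t) ^ (-a)) ∂μ
      ≤ ∫⁻ t in Ico 0 1, ∑' n, (J n).indicator (fun _ => ENNReal.ofReal ((2 ^ a) ^ (n + 1))) t ∂μ :=
        setLIntegral_mono' measurableSet_Ico hdom
    _ ≤ ∫⁻ t, ∑' n, (J n).indicator (fun _ => ENNReal.ofReal ((2 ^ a) ^ (n + 1))) t ∂μ :=
        setLIntegral_le_lintegral _ _
    _ = ∑' n, ENNReal.ofReal ((2 ^ a) ^ (n + 1)) * μ (J n) := by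
        rw [lintegral_tsum fun n => (measurable_const.indicator measurableSet_Ico).aemeasurable]
        simp only [lintegral_indicator_const measurableSet_Ico, J]
    _ ≤ ∑' n, ENNReal.ofReal (C * 2 ^ a) * ENNReal.ofReal ρ ^ n := ENNReal.tsum_le_tsum hterm
    _ = ENNReal.ofReal (C * 2 ^ a) * (1 - ENNReal.ofReal ρ)⁻¹ := by
        rw [ENNReal.tsum_mul_left, ENNReal.tsum_geometric]
    _ < ⊤ := ENNReal.mul_lt_top ENNReal.ofReal_lt_top
        (ENNReal.inv_lt_top.mpr (tsub_pos_of_lt (ENNReal.ofReal_lt_one.mpr hρ)))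

theorem exists_norm_deriv_le_one_sub_rpow_mul_hardyNorm {s : ℝ} (hs : 1 < s) :
    ∃ C > 0, ∀ h : ℂ → ℂ, MemHp s h → ∀ z : ℂ, ‖z‖ < 1 →
      ‖deriv h z‖ ≤ C * (1 - ‖z‖) ^ (-(1 / s) - 1) * hardyNorm s h := by
  obtain ⟨C, hC, hbound⟩ := exists_norm_le_one_sub_rpow_mul_hardyNorm hs
  refine ⟨C * 2 ^ (1 / s + 1), by positivity, ?_⟩
  intro h hh z hz
  set ρ := (1 - ‖z‖) / 2 with hρ_def
  have hρ : 0 < ρ := by linarith [hρ_def]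
  have hsphere : ∀ w ∈ Metric.sphere z ρ, ‖h w‖ ≤ C * ρ ^ (-(1 / s)) * hardyNorm s h := by
    intro w hw
    have hw' : ‖w‖ ≤ ‖z‖ + ρ := by
      simpa [← mem_sphere_iff_norm.mp hw] using norm_le_norm_add_norm_sub' w z
    have hw₁ : ‖w‖ < 1 := by linarith [hρ_def]
    calc ‖h w‖ ≤ C * (1 - ‖w‖) ^ (-(1 / s)) * hardyNorm s h := hbound h hh w hw₁
      _ ≤ C * ρ ^ (-(1 / s)) * hardyNorm s h := by
        have : (1 - ‖w‖) ^ (-(1 / s)) ≤ ρ ^ (-(1 / s)) :=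
          rpow_le_rpow_of_nonpos hρ (by linarith [hρ_def]) (by simp; positivity)
        exact mul_le_mul_of_nonneg_right (mul_le_mul_of_nonneg_left this hC.le)
          hh.hardyNorm_nonneg
  have hdiff : DiffContOnCl ℂ h (Metric.ball z ρ) := by
    refine hh.1.differentiableOn.diffContOnCl_ball fun w hw => ?_
    have hw' : ‖w‖ ≤ ‖z‖ + ρ := by
      simpa using (norm_le_norm_add_norm_sub' w z).trans
        (add_le_add_right (mem_closedBall_iff_norm.mp hw) _)
    simpa using (show ‖w‖ < 1 by linarith [hρ_def])
  calc ‖deriv h z‖ ≤ C * ρ ^ (-(1 / s)) * hardyNorm s h / ρ :=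
        Complex.norm_deriv_le_of_forall_mem_sphere_norm_le hρ hdiff hsphere
    _ = C * 2 ^ (1 / s + 1) * (1 - ‖z‖) ^ (-(1 / s) - 1) * hardyNorm s h := by
        have hd : 0 < 1 - ‖z‖ := by linarith
        rw [hρ_def, div_rpow hd.le zero_le_two, rpow_sub_one hd.ne', rpow_neg zero_le_two,
          rpow_add two_pos, rpow_one]
        field_simp

theorem exists_norm_conj_mul_add_mul_deriv_le {p q : ℝ} (hp : 1 < p) (hq : 1 < q) :
    ∃ K > 0, ∀ f g : ℂ → ℂ, MemHp p f → MemHp q g → ∀ t ∈ Ico (0:ℝ) 1,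
      ‖starRingEnd ℂ (f t) * (g t + t * deriv g t)‖
        ≤ K * hardyNorm p f * hardyNorm q g * (1 - t) ^ (-(1 / p + 1 / q + 1)) := by
  obtain ⟨Cf, hCf, hf_le⟩ := exists_norm_le_one_sub_rpow_mul_hardyNorm hp
  obtain ⟨Cg, hCg, hg_le⟩ := exists_norm_le_one_sub_rpow_mul_hardyNorm hq
  obtain ⟨Cd, hCd, hdg_le⟩ := exists_norm_deriv_le_one_sub_rpow_mul_hardyNorm hq
  refine ⟨Cf * (Cg + Cd), by positivity, ?_⟩
  rintro f g hf hg t ⟨ht₀, ht₁⟩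
  have hd : 0 < 1 - t := by linarith
  have hnorm : ‖(t : ℂ)‖ = t := by simp [abs_of_nonneg ht₀]
  have hf_t := hf_le f hf t (by rwa [hnorm])
  have hg_t := hg_le g hg t (by rwa [hnorm])
  have hdg_t := hdg_le g hg t (by rwa [hnorm])
  rw [hnorm] at hf_t hg_t hdg_t
  have hmono : (1 - t) ^ (-(1 / q)) ≤ (1 - t) ^ (-(1 / q) - 1) :=
    rpow_le_rpow_of_exponent_ge hd (by linarith) (by linarith)
  have hg_sum : ‖g t + t * deriv g t‖ ≤ (Cg + Cd) * (1 - t) ^ (-(1 / q) - 1) * hardyNorm q g := by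
    have hgn := hg.hardyNorm_nonneg
    calc ‖g t + t * deriv g t‖ ≤ ‖g t‖ + ‖deriv g t‖ := by
          refine (norm_add_le _ _).trans (add_le_add le_rfl ?_)
          rw [norm_mul, hnorm]
          exact mul_le_of_le_one_left (norm_nonneg _) ht₁.le
      _ ≤ Cg * (1 - t) ^ (-(1 / q)) * hardyNorm q g
            + Cd * (1 - t) ^ (-(1 / q) - 1) * hardyNorm q g := add_le_add hg_t hdg_t
      _ ≤ (Cg + Cd) * (1 - t) ^ (-(1 / q) - 1) * hardyNorm q g := by
          nlinarith [mul_le_mul_of_nonneg_left hmono (mul_nonneg hCg.le hgn)]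
  rw [norm_mul, Complex.norm_conj]
  calc ‖f t‖ * ‖g t + t * deriv g t‖
      ≤ (Cf * (1 - t) ^ (-(1 / p)) * hardyNorm p f)
          * ((Cg + Cd) * (1 - t) ^ (-(1 / q) - 1) * hardyNorm q g) :=
        mul_le_mul hf_t hg_sum (norm_nonneg _)
          (mul_nonneg (by positivity) hf.hardyNorm_nonneg)
    _ = _ := by
        rw [show -(1 / p + 1 / q + 1) = -(1 / p) + (-(1 / q) - 1) by ring, rpow_add hd]
        ring

theorem stmt16 (p q q' γ : ℝ) (hp : 1 < p) (hpq : p ≤ q)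
    (hqq' : 1 / q + 1 / q' = 1) (hγ : 0 < γ) (μ : Measure ℝ)
    (hμ : IsCarleson (1 / p + 1 / q' + 1 + γ) μ) :
    MeasureTheory.IntegrableOn
      (fun t : ℝ => (1 - t) ^ (-((1 + q' / p) / q')) * (1 - t)⁻¹)
      (Set.Ico (0:ℝ) 1) μ ∧
    ∃ C > 0, ∀ (f g : ℂ → ℂ), MemHp p f → MemHp q' g →
      ‖∫ t in Set.Ico (0:ℝ) 1,
          (starRingEnd ℂ) (f t) * (g t + (t : ℂ) * deriv g t) ∂μ‖ ≤
        C * hardyNorm p f * hardyNorm q' g := by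
  have hq' : 1 < q' :=
    (holderConjugate_iff.mpr ⟨hp.trans_le hpq, by simpa only [one_div] using hqq'⟩).symm.lt
  set a := 1 / p + 1 / q' + 1
  have hint : IntegrableOn (fun t : ℝ => (1 - t) ^ (-a)) (Ico 0 1) μ :=
    hμ.integrableOn_one_sub_rpow_neg (by positivity) (by linarith)
  refine ⟨hint.congr_fun (fun t ht => ?_) measurableSet_Ico, ?_⟩
  · have hd : 0 < 1 - t := by linarith [ht.2]
    have hp₀ : p ≠ 0 := by positivity
    have hq₀ : q' ≠ 0 := by positivity
    rw [← rpow_neg_one, ← rpow_add hd]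
    simp only [a]
    field_simp
    congr 1
    ring
  obtain ⟨K, hK, hbound⟩ := exists_norm_conj_mul_add_mul_deriv_le hp hq'
  set I := ∫ t in Ico 0 1, (1 - t) ^ (-a) ∂μ
  have hI : 0 ≤ I := setIntegral_nonneg measurableSet_Ico fun t ht => rpow_nonneg (by linarith [ht.2]) _
  refine ⟨K * (I + 1), by positivity, fun f g hf hg => ?_⟩
  calc _ ≤ ∫ t in Ico 0 1, K * hardyNorm p f * hardyNorm q' g * (1 - t) ^ (-a) ∂μ :=
        norm_integral_le_of_norm_le (hint.const_mul _)
          ((ae_restrict_mem measurableSet_Ico).mono (hbound f g hf hg))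
    _ = K * hardyNorm p f * hardyNorm q' g * I := integral_const_mul _ _
    _ ≤ K * (I + 1) * hardyNorm p f * hardyNorm q' g := by
        have := mul_nonneg hf.hardyNorm_nonneg hg.hardyNorm_nonneg
        nlinarith
end

section
/- Let μ be a positive Borel measure on [0,1) with moments μ_m = ∫ t^m dμ(t). If μ is a vanishing 2-Carleson measure, i.e. μ([t,1)) = o((1-t)^2) as t → 1^-, then (m+1)^2 μ_m → 0 as m → ∞. -/
open MeasureTheory Metric Set Complex

/-!
Split the moment at a point `δ` close to `1`. On `[δ, 1)` the layer-cake formula and the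
Carleson bound `μ([t, 1)) ≤ ε (1 - t)²` give
`∫ tᵐ dμ = m ∫₀¹ μ([t, 1)) tᵐ⁻¹ dt ≤ ε m ∫₀¹ (1 - t)² tᵐ⁻¹ dt = 2ε / ((m + 1)(m + 2))`,
which stays `ε`-small after multiplication by `(m + 1)²`. On `[0, δ)` one has
`tᵐ ≤ δ^(m - m₀) t^m₀` for any `m₀` with a finite moment, and geometric decay beats `(m + 1)²`.
-/

open Filter Topology
open scoped ENNReal

noncomputable def lmoment (μ : Measure ℝ) (n : ℕ) : ℝ≥0∞ :=
  ∫⁻ t in Ico (0:ℝ) 1, ENNReal.ofReal (t ^ n) ∂μ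

theorem moment_eq_toReal_lmoment (μ : Measure ℝ) (n : ℕ) :
    moment μ n = (lmoment μ n).toReal := by
  rw [moment, lmoment, integral_eq_lintegral_of_nonneg_ae]
  · filter_upwards [ae_restrict_mem measurableSet_Ico] with t ht using pow_nonneg ht.1 n
  · exact (continuous_pow n).aestronglyMeasurable

theorem moment_nonneg (μ : Measure ℝ) (n : ℕ) : 0 ≤ moment μ n :=
  setIntegral_nonneg measurableSet_Ico fun _ ht => pow_nonneg ht.1 n

theorem integral_one_sub_sq_mul_pow (k : ℕ) :
    ∫ t in (0:ℝ)..1, (1 - t) ^ 2 * t ^ k = 2 / (((k : ℝ) + 1) * (k + 2) * (k + 3)) := by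
  have hexpand : ∀ t : ℝ, (1 - t) ^ 2 * t ^ k = t ^ k - 2 * t ^ (k + 1) + t ^ (k + 2) :=
    fun t => by ring
  simp_rw [hexpand]
  have hint {f : ℝ → ℝ} (hf : Continuous f) : IntervalIntegrable f volume 0 1 :=
    hf.intervalIntegrable 0 1
  rw [intervalIntegral.integral_add (hint (by fun_prop)) (hint (by fun_prop)),
    intervalIntegral.integral_sub (hint (by fun_prop)) (hint (by fun_prop)),
    intervalIntegral.integral_const_mul]
  simp only [integral_pow]
  push_cast
  field_simp
  ring

section Tail

variable (μ : Measure ℝ) {δ ε : ℝ}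

theorem restrict_Ico_Ici_le_indicator (hε : 0 ≤ ε) (hδ : δ < 1)
    (hb : ∀ t ∈ Ico δ 1, μ (Ico t 1) ≤ ENNReal.ofReal (ε * (1 - t) ^ 2)) (t : ℝ) :
    μ.restrict (Ico δ 1) (Ici t) ≤
      (Iio 1).indicator (fun t => ENNReal.ofReal (ε * (1 - t) ^ 2)) t := by
  have hinter : Ici t ∩ Ico δ 1 = Ico (max δ t) 1 := by
    ext x
    simp only [mem_inter_iff, mem_Ici, mem_Ico, max_le_iff]
    tauto
  rw [Measure.restrict_apply measurableSet_Ici, hinter]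
  rcases lt_or_ge t 1 with ht | ht
  · rw [indicator_of_mem (mem_Iio.2 ht)]
    refine (hb _ ⟨le_max_left _ _, max_lt hδ ht⟩).trans (ENNReal.ofReal_le_ofReal ?_)
    have hpos : 0 ≤ 1 - max δ t := by linarith [max_lt hδ ht]
    gcongr
    exact le_max_right _ _
  · simp [Ico_eq_empty_of_le (le_max_of_le_right ht)]

theorem lintegral_Ico_pow_le_of_tail_le (hε : 0 ≤ ε) (hδ₀ : 0 ≤ δ) (hδ₁ : δ < 1)
    (hb : ∀ t ∈ Ico δ 1, μ (Ico t 1) ≤ ENNReal.ofReal (ε * (1 - t) ^ 2)) {m : ℕ} (hm : m ≠ 0) :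
    ∫⁻ t in Ico δ 1, ENNReal.ofReal (t ^ m) ∂μ ≤
      ENNReal.ofReal (2 * ε / (((m : ℝ) + 1) * (m + 2))) := by
  obtain ⟨k, rfl⟩ := Nat.exists_eq_add_one_of_ne_zero hm
  have hnonneg : 0 ≤ᵐ[μ.restrict (Ico δ 1)] id := by
    filter_upwards [ae_restrict_mem measurableSet_Ico] with t ht using hδ₀.trans ht.1
  have layer := lintegral_rpow_eq_lintegral_meas_le_mul _ hnonneg aemeasurable_id
    (p := ((k + 1 : ℕ) : ℝ)) (by positivity)
  have hexp : ((k + 1 : ℕ) : ℝ) - 1 = k := by push_cast; ring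
  simp only [id, hexp, Real.rpow_natCast] at layer
  have hint : IntegrableOn (fun t : ℝ => ε * ((1 - t) ^ 2 * t ^ k)) (Ioo 0 1) :=
    (Continuous.integrableOn_Icc (by fun_prop)).mono_set Ioo_subset_Icc_self
  calc ∫⁻ t in Ico δ 1, ENNReal.ofReal (t ^ (k + 1)) ∂μ
      = ENNReal.ofReal ((k + 1 : ℕ) : ℝ) *
          ∫⁻ t in Ioi 0, μ.restrict (Ico δ 1) (Ici t) * ENNReal.ofReal (t ^ k) := layer
    _ ≤ ENNReal.ofReal ((k + 1 : ℕ) : ℝ) * ∫⁻ t in Ioi 0,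
          (Iio 1).indicator (fun t => ENNReal.ofReal (ε * ((1 - t) ^ 2 * t ^ k))) t := by
      have hsplit : (fun t : ℝ => ENNReal.ofReal (ε * ((1 - t) ^ 2 * t ^ k))) =
          fun t => ENNReal.ofReal (ε * (1 - t) ^ 2) * ENNReal.ofReal (t ^ k) :=
        funext fun t => by rw [← mul_assoc, ENNReal.ofReal_mul (by positivity)]
      gcongr with t
      rw [hsplit, indicator_mul_left]
      exact mul_le_mul_left (restrict_Ico_Ici_le_indicator μ hε hδ₁ hb t) _
    _ = ENNReal.ofReal ((k + 1 : ℕ) : ℝ) *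
          ENNReal.ofReal (ε * (2 / ((k + 1) * (k + 2) * (k + 3)))) := by
      rw [lintegral_indicator measurableSet_Iio, Measure.restrict_restrict measurableSet_Iio,
        Iio_inter_Ioi, ← ofReal_integral_eq_lintegral_ofReal hint, ← integral_Ioc_eq_integral_Ioo,
        ← intervalIntegral.integral_of_le zero_le_one, intervalIntegral.integral_const_mul,
        integral_one_sub_sq_mul_pow]
      filter_upwards [ae_restrict_mem measurableSet_Ioo] with t ht
      have := ht.1.le
      positivity
    _ = ENNReal.ofReal (2 * ε / ((((k + 1 : ℕ) : ℝ) + 1) * (((k + 1 : ℕ) : ℝ) + 2))) := by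
      rw [← ENNReal.ofReal_mul (by positivity)]
      congr 1
      push_cast
      field_simp
      ring

end Tail

theorem lintegral_Ico_zero_pow_le (μ : Measure ℝ) {δ : ℝ} {m₀ m : ℕ} (h : m₀ ≤ m) :
    ∫⁻ t in Ico 0 δ, ENNReal.ofReal (t ^ m) ∂μ ≤
      ENNReal.ofReal (δ ^ (m - m₀)) * ∫⁻ t in Ico 0 δ, ENNReal.ofReal (t ^ m₀) ∂μ := by
  rw [← lintegral_const_mul' _ _ ENNReal.ofReal_ne_top]
  refine setLIntegral_mono' measurableSet_Ico fun t ht => ?_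
  have ht₀ : 0 ≤ t := ht.1
  have hδ : 0 ≤ δ := ht.1.trans ht.2.le
  rw [← ENNReal.ofReal_mul (by positivity), ← Nat.sub_add_cancel h, pow_add, Nat.add_sub_cancel]
  gcongr
  exact ht.2.le

theorem moment_le_of_tail_le (μ : Measure ℝ) {δ ε : ℝ} (hε : 0 ≤ ε) (hδ₀ : 0 ≤ δ) (hδ₁ : δ < 1)
    (hb : ∀ t ∈ Ico δ 1, μ (Ico t 1) ≤ ENNReal.ofReal (ε * (1 - t) ^ 2))
    {m₀ m : ℕ} (hm₀ : lmoment μ m₀ ≠ ⊤) (h : m₀ < m) :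
    moment μ m ≤ δ ^ (m - m₀) * moment μ m₀ + 2 * ε / (((m : ℝ) + 1) * (m + 2)) := by
  have hsplit : lmoment μ m = ∫⁻ t in Ico 0 δ, ENNReal.ofReal (t ^ m) ∂μ +
      ∫⁻ t in Ico δ 1, ENNReal.ofReal (t ^ m) ∂μ := by
    rw [lmoment, ← lintegral_union measurableSet_Ico Ico_disjoint_Ico_same,
      Ico_union_Ico_eq_Ico hδ₀ hδ₁.le]
  have hhead : ∫⁻ t in Ico 0 δ, ENNReal.ofReal (t ^ m) ∂μ ≤
      ENNReal.ofReal (δ ^ (m - m₀) * moment μ m₀) := by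
    rw [ENNReal.ofReal_mul (by positivity), moment_eq_toReal_lmoment, ENNReal.ofReal_toReal hm₀]
    exact (lintegral_Ico_zero_pow_le μ h.le).trans
      (by gcongr; exact lintegral_mono_set (Ico_subset_Ico_right hδ₁.le))
  rw [moment_eq_toReal_lmoment]
  refine ENNReal.toReal_le_of_le_ofReal (by positivity [moment_nonneg μ m₀]) ?_
  rw [hsplit, ENNReal.ofReal_add (by positivity [moment_nonneg μ m₀]) (by positivity)]
  exact add_le_add hhead (lintegral_Ico_pow_le_of_tail_le μ hε hδ₀ hδ₁ hb (by omega))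

theorem tendsto_add_one_sq_mul_pow_sub {δ : ℝ} (hδ₀ : 0 ≤ δ) (hδ₁ : δ < 1) (m₀ : ℕ) :
    Tendsto (fun m : ℕ => ((m : ℝ) + 1) ^ 2 * δ ^ (m - m₀)) atTop (𝓝 0) := by
  rw [← tendsto_add_atTop_iff_nat m₀]
  have h := tendsto_pow_const_mul_const_pow_of_lt_one 2 hδ₀ hδ₁ |>.add
    ((tendsto_pow_const_mul_const_pow_of_lt_one 1 hδ₀ hδ₁).const_mul (2 * ((m₀ : ℝ) + 1)) |>.add
      ((tendsto_pow_const_mul_const_pow_of_lt_one 0 hδ₀ hδ₁).const_mul (((m₀ : ℝ) + 1) ^ 2)))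
  simp only [mul_zero, add_zero] at h
  convert h using 2 with m
  push_cast [Nat.add_sub_cancel]
  ring

theorem eventually_sq_mul_moment_lt {μ : Measure ℝ} (hμ : IsVanishingCarleson 2 μ) {m₀ : ℕ}
    (hm₀ : lmoment μ m₀ ≠ ⊤) {ε : ℝ} (hε : 0 < ε) :
    ∀ᶠ m : ℕ in atTop, ((m : ℝ) + 1) ^ 2 * moment μ m < ε := by
  obtain ⟨δ, ⟨hδ₀, hδ₁⟩, hb⟩ := hμ (ε / 4) (by positivity)
  simp only [Real.rpow_two] at hb
  have hhead : ∀ᶠ m : ℕ in atTop, ((m : ℝ) + 1) ^ 2 * δ ^ (m - m₀) * moment μ m₀ < ε / 2 := by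
    have h := (tendsto_add_one_sq_mul_pow_sub hδ₀ hδ₁ m₀).mul_const (moment μ m₀)
    rw [zero_mul] at h
    exact h.eventually (gt_mem_nhds (by positivity))
  filter_upwards [hhead, eventually_gt_atTop m₀] with m hm hm₀m
  have htail : ((m : ℝ) + 1) ^ 2 * (2 * (ε / 4) / ((m + 1) * (m + 2))) ≤ ε / 2 := by
    rw [show ((m : ℝ) + 1) ^ 2 * (2 * (ε / 4) / ((m + 1) * (m + 2))) =
        ε / 2 * ((m + 1) / (m + 2)) by field_simp; ring]
    exact mul_le_of_le_one_right (by positivity) ((div_le_one (by positivity)).2 (by linarith))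
  calc ((m : ℝ) + 1) ^ 2 * moment μ m
      ≤ ((m : ℝ) + 1) ^ 2 * (δ ^ (m - m₀) * moment μ m₀ + 2 * (ε / 4) / ((m + 1) * (m + 2))) := by
        gcongr
        exact moment_le_of_tail_le μ (by positivity) hδ₀ hδ₁ hb hm₀ hm₀m
    _ = ((m : ℝ) + 1) ^ 2 * δ ^ (m - m₀) * moment μ m₀ +
          ((m : ℝ) + 1) ^ 2 * (2 * (ε / 4) / ((m + 1) * (m + 2))) := by ring
    _ < ε / 2 + ε / 2 := add_lt_add_of_lt_of_le hm htail
    _ = ε := add_halves ε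

theorem stmt17 (μ : Measure ℝ) (hμ : IsVanishingCarleson 2 μ) :
    Filter.Tendsto (fun m : ℕ => ((m : ℝ) + 1) ^ 2 * moment μ m)
      Filter.atTop (nhds 0) := by
  by_cases hfinite : ∃ m₀, lmoment μ m₀ ≠ ⊤
  · obtain ⟨m₀, hm₀⟩ := hfinite
    refine NormedAddGroup.tendsto_nhds_zero.2 fun ε hε => ?_
    filter_upwards [eventually_sq_mul_moment_lt hμ hm₀ hε] with m hm
    rwa [Real.norm_of_nonneg (by positivity [moment_nonneg μ m])]
  · -- every moment integral diverges, so the Bochner moments are the junk value `0`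
    push Not at hfinite
    simp [moment_eq_toReal_lmoment, hfinite]
end
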